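/- Let X be a type with a well-founded strict order <. For all words w₁ and w₂ over X, |w₁ ++ w₂| = |w₁| + |w₂^{(w₁)}|, where w₂^{(w₁)} is the word obtained from w₂ by deleting every letter that is strictly smaller than some letter of w₁. -/

import Mathlib

open Classical in
/-- The lexicographic maximum measure of a word of labels: `|ε| = ∅` and
`|k·w| = {k} + |w'|`, where `w'` is obtained from `w` by deleting every letter
strictly smaller than `k`. -/
noncomputable def lmMeasure {X : Type*} [Preorder X] : List X → Multiset X
  | [] => 0
  | k :: w => {k} + lmMeasure (w.filter (fun x => decide (¬ x < k)))
termination_by w => w.length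
decreasing_by
  simp
  exact (List.length_filter_le _ _).trans (by simp)

/-- The Dershowitz–Manna multiset extension of the strict order on `X`. -/
def DMLT {X : Type*} [Preorder X] (M N : Multiset X) : Prop :=
  ∃ M₁ M₂ M₃ : Multiset X, M = M₁ + M₂ ∧ N = M₁ + M₃ ∧ M₃ ≠ 0 ∧
    ∀ x ∈ M₂, ∃ y ∈ M₃, x < y

/-- The reflexive closure of the Dershowitz–Manna multiset extension. -/
def DMLE {X : Type*} [Preorder X] (M N : Multiset X) : Prop :=
  M = N ∨ DMLT M N

open Classical in
/-- `delBelow w' w` is the word obtained from `w` by deleting every letter that is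
strictly smaller than some letter of `w'`. -/
noncomputable def delBelow {X : Type*} [Preorder X] (w' w : List X) : List X :=
  w.filter (fun x => decide (¬ ∃ y ∈ w', x < y))

/-! Removing the letters below `k` commutes with removing the letters below some letter of a
word `w'` once `w'` itself has been cut below `k`: a letter of `w'` lying below `k` can only
delete letters that `k` deletes anyway, by transitivity. Unfolding `|k · (w ++ w₂)|` once and
recursing on the shorter filtered word then gives the identity. -/

section

variable {X : Type*} [Preorder X]

theorem delBelow_nil (w : List X) : delBelow [] w = w := by
  simp [delBelow]

open Classical in
theorem delBelow_cons (k : X) (w' w : List X) :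
    delBelow (k :: w') w =
      delBelow (w'.filter fun y => decide (¬ y < k)) (w.filter fun x => decide (¬ x < k)) := by
  unfold delBelow
  rw [List.filter_filter]
  refine List.filter_congr fun x _ => ?_
  rw [Bool.eq_iff_iff]
  simp only [Bool.and_eq_true, decide_eq_true_eq, List.mem_filter, List.mem_cons]
  constructor
  · intro hx
    refine ⟨?_, fun hxk => hx ⟨k, Or.inl rfl, hxk⟩⟩
    rintro ⟨y, ⟨hy, -⟩, hxy⟩
    exact hx ⟨y, Or.inr hy, hxy⟩
  · rintro ⟨hx, hxk⟩ ⟨y, rfl | hy, hxy⟩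
    · exact hxk hxy
    · by_cases hyk : y < k
      · exact hxk (hxy.trans hyk)
      · exact hx ⟨y, ⟨hy, hyk⟩, hxy⟩

end

/-- The measure of a concatenation: `|w₁ ++ w₂| = |w₁| + |w₂^{(w₁)}|`, where
`w₂^{(w₁)}` deletes from `w₂` every letter strictly smaller than some letter of `w₁`. -/
theorem lmMeasure_append
    {X : Type*} [Preorder X]
    (w₁ w₂ : List X) :
    lmMeasure (w₁ ++ w₂) = lmMeasure w₁ + lmMeasure (delBelow w₁ w₂) :=
  match w₁ with
  | [] => by simp [lmMeasure, delBelow_nil]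
  | k :: w => by
    rw [List.cons_append, lmMeasure, lmMeasure, List.filter_append,
      lmMeasure_append, delBelow_cons, add_assoc]
termination_by w₁.length
decreasing_by exact Nat.lt_succ_of_le (List.length_filter_le _ _)
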